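/- arXiv:2410.08807 — 2 statements merged into one kernel-verified Lean document; each statement's English description precedes it below -/
import Mathlib

section
/- If v*(j+1) ∈ U(j+1) ⊖ K S(j+1) and w ∈ W, then v*(j+1) + K A_K^j w ∈ U(j+1) ⊖ K S(j), where K S(j) = {K s : s ∈ S(j)} and S(j+1) = S(j) ⊕ A_K^j W. -/
open Pointwise

def pontryaginDiff {m : ℕ} (A B : Set (Fin m → ℝ)) : Set (Fin m → ℝ) :=
  {a | ∀ b ∈ B, a + b ∈ A}

/-- Shifted candidate input satisfies the (less-tightened) input constraint:
    if v*(j+1) ∈ U(j+1) ⊖ K S(j+1), S(j+1) = S(j) ⊕ A_K^j W and w ∈ W, then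
    v*(j+1) + K A_K^j w ∈ U(j+1) ⊖ K S(j). -/
theorem candidate_input_constraint {n m : ℕ}
    (A_K : (Fin n → ℝ) →ₗ[ℝ] (Fin n → ℝ))
    (K : (Fin n → ℝ) →ₗ[ℝ] (Fin m → ℝ))
    (W : Set (Fin n → ℝ)) (S : ℕ → Set (Fin n → ℝ))
    (U : ℕ → Set (Fin m → ℝ))
    (vstar : ℕ → (Fin m → ℝ)) (j : ℕ)
    (hSrec : S (j + 1) = S j + (A_K ^ j) '' W)
    (hv : vstar (j + 1) ∈ pontryaginDiff (U (j + 1)) (K '' S (j + 1)))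
    (w : Fin n → ℝ) (hw : w ∈ W) :
    vstar (j + 1) + K ((A_K ^ j) w) ∈ pontryaginDiff (U (j + 1)) (K '' S j) := by
  rintro b ⟨s, hs, rfl⟩
  have hmem : s + (A_K ^ j) w ∈ S (j + 1) := by
    rw [hSrec]; exact Set.add_mem_add hs ⟨w, hw, rfl⟩
  have := hv (K (s + (A_K ^ j) w)) ⟨_, hmem, rfl⟩
  simpa [map_add, add_comm, add_assoc, add_left_comm] using this
end

section
/- Let the terminal sets be updated by Z_{f,k+1} = Z_{f,k} ⊕ A_K^{N_k − 1} W with Z_{f,k̄} = {0} at some index k̄, and suppose the horizon lengths N_i are strictly decreasing for i ≥ k̄ with N_{k̄} = N̄. Then Z_{f,k} ⊕ W ⊆ S(N̄) for every k > k̄, where S(N̄) = Σ_{i=0}^{N̄−1} A_K^i W. -/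
/-!
Write `S j = T 0 + ⋯ + T (j - 1)` with `T i = A_K ^ i '' W`, so that `S` is monotone because every
`T i` contains `0`. The invariant `Z k + S (N k) ⊆ S (N k̄)` holds at `k = k̄` and survives each update:
the new summand `T (N k - 1)` of `Z (k + 1)` together with `S (N (k + 1)) ⊆ S (N k - 1)` makes up
`S (N k)`, since `N (k + 1) < N k`. Finally `W = S 1 ⊆ S (N k)` because `N k ≥ 1`.
-/

open Pointwise

namespace PartialMinkowskiSum

variable {M : Type*} [AddCommMonoid M] {S T : ℕ → Set M}

theorem monotone (hT : ∀ j, 0 ∈ T j) (hS : ∀ j, S (j + 1) = S j + T j) : Monotone S :=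
  monotone_nat_of_le_succ fun j => hS j ▸ Set.subset_add_left _ (hT j)

theorem add_add_subset_of_lt (hT : ∀ j, 0 ∈ T j) (hS : ∀ j, S (j + 1) = S j + T j)
    (Z : Set M) {N' N : ℕ} (hN : N' < N) : Z + T (N - 1) + S N' ⊆ Z + S N :=
  calc Z + T (N - 1) + S N'
      ⊆ Z + T (N - 1) + S (N - 1) := Set.add_subset_add_left (monotone hT hS (by omega))
    _ = Z + S (N - 1 + 1) := by rw [hS, add_assoc, add_comm (T _)]
    _ = Z + S N := by rw [Nat.sub_add_cancel (by omega)]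

theorem add_subset_of_strictAnti_horizon (hT : ∀ j, 0 ∈ T j) (hS : ∀ j, S (j + 1) = S j + T j)
    {Z : ℕ → Set M} {N : ℕ → ℕ} {kbar m : ℕ} (hZ0 : Z kbar = {0})
    (hZ : ∀ k, kbar ≤ k → k < m → Z (k + 1) = Z k + T (N k - 1))
    (hN : ∀ k, kbar ≤ k → k < m → N (k + 1) < N k) :
    ∀ k, kbar ≤ k → k ≤ m → Z k + S (N k) ⊆ S (N kbar) := by
  refine Nat.le_induction (fun _ => by rw [hZ0, Set.singleton_zero, zero_add]) ?_
  intro k hk ih hkm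
  rw [hZ k hk hkm]
  exact (add_add_subset_of_lt hT hS _ (hN k hk hkm)).trans (ih (Nat.le_of_succ_le hkm))

end PartialMinkowskiSum

/-- Terminal set containment: with Z_{f,k̄} = {0},
    Z_{f,k+1} = Z_{f,k} ⊕ A_K^{N_k−1} W and N strictly decreasing on [k̄, m],
    Z_{f,k} ⊕ W ⊆ S(N̄) for every k̄ < k ≤ m, where N̄ = N k̄ and
    S(j) = Σ_{i=0}^{j−1} A_K^i W. -/
theorem terminal_set_containment {n : ℕ}
    (A_K : (Fin n → ℝ) →ₗ[ℝ] (Fin n → ℝ))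
    (W : Set (Fin n → ℝ)) (hW0 : (0 : Fin n → ℝ) ∈ W)
    (S : ℕ → Set (Fin n → ℝ))
    (hS0 : S 0 = {0})
    (hSrec : ∀ j, S (j + 1) = S j + (A_K ^ j) '' W)
    (Z : ℕ → Set (Fin n → ℝ)) (Nseq : ℕ → ℕ) (kbar m : ℕ)
    (hNpos : ∀ i, 0 < Nseq i)
    (hZ0 : Z kbar = {0})
    (hZrec : ∀ k, kbar ≤ k → k < m → Z (k + 1) = Z k + (A_K ^ (Nseq k - 1)) '' W)
    (hNdec : ∀ i, kbar ≤ i → i < m → Nseq (i + 1) < Nseq i) :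
    ∀ k, kbar < k → k ≤ m → Z k + W ⊆ S (Nseq kbar) := by
  intro k hk hkm
  have hT : ∀ j, (0 : Fin n → ℝ) ∈ ⇑(A_K ^ j) '' W := fun j => ⟨0, hW0, map_zero (A_K ^ j)⟩
  have hS1 : S 1 = W := by simp [hSrec 0, hS0, Set.singleton_zero]
  have hW : W ⊆ S (Nseq k) := hS1 ▸ PartialMinkowskiSum.monotone hT hSrec (hNpos k)
  exact (Set.add_subset_add_left hW).trans
    (PartialMinkowskiSum.add_subset_of_strictAnti_horizon hT hSrec hZ0 hZrec hNdec k hk.le hkm)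
end
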